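/- Let K be a finite field with char(K) = 2, L a field extension of K of finite degree k ≥ 1, and S = {restrictScalars_K(l) : l a 1-dimensional L-subspace of L²} the planar spread of the 2k-dimensional K-space L². Let M ∈ GL(2, L) have irreducible characteristic polynomial over L and multiplicative order |L|² − 1, and set H̄ = ⟨M^{|L|−1}⟩, acting K-linearly on L². Then H̄ acts regularly on S: for any U, U′ ∈ S there is exactly one A ∈ H̄ with U·A = U′; in particular S = {U·A : A ∈ H̄} for any U ∈ S. -/

import Mathlib

open Module

/-- The planar spread of the `K`-vector space `L²` obtained by field reduction: the set of
`K`-subspaces arising as `restrictScalars K` of the `L`-lines of `L²`. -/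
def fieldReductionSpread (K L : Type*) [Field K] [Field L] [Algebra K L] :
    Set (Submodule K (Fin 2 → L)) :=
  {U | ∃ l : Submodule L (Fin 2 → L), finrank L l = 1 ∧ U = l.restrictScalars K}

/-- The `K`-linear action of `A ∈ GL(2, L)` on `K`-subspaces of `L²`: `U · A` is the image
of `U` under the (in particular `K`-linear) map given by the matrix `A`. -/
noncomputable def mapGLK (K : Type*) {L : Type*} [Field K] [Field L] [Algebra K L]
    (A : GL (Fin 2) L) (U : Submodule K (Fin 2 → L)) : Submodule K (Fin 2 → L) :=
  U.map (LinearMap.restrictScalars K (Matrix.toLin' (A : Matrix (Fin 2) (Fin 2) L)))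

/-!
Let `q = |L|` and `H̄ = ⟨M^(q-1)⟩`, of order `q + 1`. An element of `⟨M⟩` mapping an `L`-line to
itself has an eigenvector, hence is a scalar, because `L[M]` is a field (`charpoly M` is
irreducible). A scalar `A ∈ H̄` satisfies `A^(q-1) = 1` and `A^(q+1) = 1`, and `q - 1`, `q + 1` are
coprime since `q` is even; so `H̄` acts freely on the `q + 1` lines of `L²`. Hence every orbit map
`H̄ → S` is an injection between sets of size `q + 1`, i.e. a bijection.
-/

open Polynomial
open scoped Matrix LinearAlgebra.Projectivization

theorem Nat.coprime_sub_one_add_one_of_even {q : ℕ} (hq : Even q) :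
    Nat.Coprime (q - 1) (q + 1) := by
  rcases Nat.eq_zero_or_pos q with rfl | hpos
  · simp
  have hodd : Odd (q - 1) := Nat.Even.sub_odd hpos hq odd_one
  rw [show q + 1 = 2 + (q - 1) by omega, Nat.coprime_add_self_right]
  exact hodd.coprime_two_right

theorem orderOf_pow_sub_one_of_orderOf_eq_sq_sub_one {G : Type*} [Group G] {x : G} {q : ℕ}
    (hq : 1 < q) (hx : orderOf x = q ^ 2 - 1) : orderOf (x ^ (q - 1)) = q + 1 := by
  have hfactor : q ^ 2 - 1 = (q - 1) * (q + 1) := by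
    simpa [mul_comm] using Nat.sq_sub_sq q 1
  rw [orderOf_pow_of_dvd (by omega) ⟨q + 1, hx.trans hfactor⟩, hx, hfactor,
    Nat.mul_div_cancel_left _ (by omega)]

namespace Matrix

variable {n L : Type*} [Fintype n] [DecidableEq n] [Field L] {N : Matrix n n L}

theorem aeval_eq_zero_of_mulVec_eq_zero (hirr : Irreducible N.charpoly) {p : L[X]}
    {v : n → L} (hv : v ≠ 0) (h : aeval N p *ᵥ v = 0) : aeval N p = 0 := by
  by_cases hdvd : N.charpoly ∣ p
  · obtain ⟨r, rfl⟩ := hdvd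
    rw [map_mul, aeval_self_charpoly, zero_mul]
  obtain ⟨a, b, hab⟩ := hirr.coprime_iff_not_dvd.2 hdvd
  have hinv : aeval N b * aeval N p = 1 := by
    simpa [aeval_self_charpoly] using congrArg (aeval N) hab
  refine absurd ?_ hv
  rw [← one_mulVec v, ← hinv, ← mulVec_mulVec, h, mulVec_zero]

theorem aeval_eq_algebraMap_of_mulVec_eq_smul (hirr : Irreducible N.charpoly) {p : L[X]}
    {v : n → L} (hv : v ≠ 0) {c : L} (h : aeval N p *ᵥ v = c • v) :
    aeval N p = algebraMap L _ c := by
  have hker : aeval N (p - C c) *ᵥ v = 0 := by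
    rw [map_sub, aeval_C, sub_mulVec, h, Algebra.algebraMap_eq_smul_one, smul_mulVec,
      one_mulVec, sub_self]
  simpa [sub_eq_zero] using aeval_eq_zero_of_mulVec_eq_zero hirr hv hker

namespace GeneralLinearGroup

theorem exists_val_eq_algebraMap_of_map_eq_self [Finite L] {M A : GL n L}
    (hirr : Irreducible (M : Matrix n n L).charpoly) (hA : A ∈ Subgroup.zpowers M)
    {l : Submodule L (n → L)} (hl : finrank L l = 1)
    (hmap : l.map (Matrix.toLin' (A : Matrix n n L)) = l) :
    ∃ c : L, (A : Matrix n n L) = algebraMap L _ c := by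
  obtain ⟨i, rfl⟩ := mem_powers_iff_mem_zpowers.2 hA
  set x := Projectivization.mk'' l hl
  have hlx : l = L ∙ x.rep := by rw [← x.submodule_eq, Projectivization.submodule_mk'']
  have hmem : ((M ^ i : GL n L) : Matrix n n L) *ᵥ x.rep ∈ l := by
    rw [← hmap]
    exact Submodule.mem_map_of_mem (hlx ▸ Submodule.mem_span_singleton_self _)
  rw [hlx, Submodule.mem_span_singleton] at hmem
  obtain ⟨c, hc⟩ := hmem
  refine ⟨c, ?_⟩
  simpa using aeval_eq_algebraMap_of_mulVec_eq_smul hirr x.rep_nonzero (p := X ^ i)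
    (by simpa using hc.symm)

theorem eq_one_of_val_eq_algebraMap [Fintype L] (hq : Even (Fintype.card L)) {A : GL n L}
    {c : L} (hA : (A : Matrix n n L) = algebraMap L _ c)
    (hA' : A ^ (Fintype.card L + 1) = 1) : A = 1 := by
  have hfrob : A ^ (Fintype.card L - 1) * A = A := by
    rw [← pow_succ, Nat.sub_add_cancel Fintype.card_pos]
    ext1
    rw [Units.val_pow_eq_pow_val, hA, ← map_pow, FiniteField.pow_card]
  have hA1 : A ^ (Fintype.card L - 1) = 1 := mul_eq_right.1 hfrob
  simpa [(Nat.coprime_sub_one_add_one_of_even hq).gcd_eq_one] using pow_gcd_eq_one.2 ⟨hA1, hA'⟩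

end GeneralLinearGroup

end Matrix

section FieldReduction

variable {K L : Type*} [Field K] [Field L] [Algebra K L]

theorem mapGLK_restrictScalars (A : GL (Fin 2) L) (l : Submodule L (Fin 2 → L)) :
    mapGLK K A (l.restrictScalars K)
      = (l.map (Matrix.toLin' (A : Matrix (Fin 2) (Fin 2) L))).restrictScalars K :=
  rfl

theorem mapGLK_mul (A B : GL (Fin 2) L) (U : Submodule K (Fin 2 → L)) :
    mapGLK K (A * B) U = mapGLK K A (mapGLK K B U) := by
  rw [mapGLK, mapGLK, mapGLK, ← Submodule.map_comp, Units.val_mul, Matrix.toLin'_mul]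
  rfl

theorem mapGLK_one (U : Submodule K (Fin 2 → L)) : mapGLK K 1 U = U := by
  rw [mapGLK, Units.val_one, Matrix.toLin'_one]
  exact Submodule.map_id U

theorem mapGLK_mem_fieldReductionSpread (A : GL (Fin 2) L) {U : Submodule K (Fin 2 → L)}
    (hU : U ∈ fieldReductionSpread K L) : mapGLK K A U ∈ fieldReductionSpread K L := by
  obtain ⟨l, hl, rfl⟩ := hU
  refine ⟨_, ?_, mapGLK_restrictScalars A l⟩
  rw [← hl]
  exact (Matrix.GeneralLinearGroup.toLin A).toLinearEquiv.finrank_map_eq l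

theorem fieldReductionSpread_eq_range :
    fieldReductionSpread K L
      = Set.range fun x : ℙ L (Fin 2 → L) ↦ x.submodule.restrictScalars K := by
  ext U
  constructor
  · rintro ⟨l, hl, rfl⟩
    exact ⟨Projectivization.mk'' l hl, congrArg _ (Projectivization.submodule_mk'' l hl)⟩
  · rintro ⟨x, rfl⟩
    exact ⟨x.submodule, x.finrank_submodule, rfl⟩

theorem natCard_fieldReductionSpread_le [Fintype L] :
    Nat.card (fieldReductionSpread K L) ≤ Fintype.card L + 1 := by
  rw [fieldReductionSpread_eq_range, ← Nat.card_eq_fintype_card,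
    ← Projectivization.card_of_finrank_two L (Fin 2 → L) (finrank_fin_fun L)]
  exact Finite.card_range_le _

theorem eq_one_of_mapGLK_eq_self [Fintype L] (hq : Even (Fintype.card L)) {M A : GL (Fin 2) L}
    (hirr : Irreducible (M : Matrix (Fin 2) (Fin 2) L).charpoly)
    (hA : A ∈ Subgroup.zpowers M) (hA' : A ^ (Fintype.card L + 1) = 1)
    {U : Submodule K (Fin 2 → L)} (hU : U ∈ fieldReductionSpread K L) (hfix : mapGLK K A U = U) :
    A = 1 := by
  obtain ⟨l, hl, rfl⟩ := hU
  rw [mapGLK_restrictScalars] at hfix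
  obtain ⟨c, hc⟩ := Matrix.GeneralLinearGroup.exists_val_eq_algebraMap_of_map_eq_self hirr hA hl
    (Submodule.restrictScalars_injective K _ _ hfix)
  exact Matrix.GeneralLinearGroup.eq_one_of_val_eq_algebraMap hq hc hA'

theorem bijective_mapGLK_zpowers [Fintype L] (hq : Even (Fintype.card L)) {M : GL (Fin 2) L}
    (hirr : Irreducible (M : Matrix (Fin 2) (Fin 2) L).charpoly)
    (hord : orderOf M = Fintype.card L ^ 2 - 1)
    {U : Submodule K (Fin 2 → L)} (hU : U ∈ fieldReductionSpread K L) :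
    Function.Bijective fun A : Subgroup.zpowers (M ^ (Fintype.card L - 1)) ↦
      (⟨mapGLK K A U, mapGLK_mem_fieldReductionSpread _ hU⟩ : fieldReductionSpread K L) := by
  have hordH := orderOf_pow_sub_one_of_orderOf_eq_sq_sub_one Fintype.one_lt_card hord
  refine Function.Injective.bijective_of_nat_card_le ?_ ?_
  · rintro ⟨A, hA⟩ ⟨B, hB⟩ hAB
    have hAB' : mapGLK K A U = mapGLK K B U := congrArg Subtype.val hAB
    have hfix : mapGLK K (B⁻¹ * A) U = U := by
      rw [mapGLK_mul, hAB', ← mapGLK_mul, inv_mul_cancel, mapGLK_one]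
    have hmem : B⁻¹ * A ∈ Subgroup.zpowers (M ^ (Fintype.card L - 1)) :=
      Subgroup.mul_mem _ (Subgroup.inv_mem _ hB) hA
    have hpow : (B⁻¹ * A) ^ (Fintype.card L + 1) = 1 :=
      orderOf_dvd_iff_pow_eq_one.1 (hordH ▸ orderOf_dvd_of_mem_zpowers hmem)
    have hzM : B⁻¹ * A ∈ Subgroup.zpowers M :=
      Subgroup.zpowers_le.2 (Subgroup.pow_mem _ (Subgroup.mem_zpowers M) _) hmem
    exact Subtype.ext (inv_mul_eq_one.1 (eq_one_of_mapGLK_eq_self hq hirr hzM hpow hU hfix)).symm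
  · rw [Nat.card_zpowers, hordH]
    exact natCard_fieldReductionSpread_le

end FieldReduction

theorem singer_subgroup_regular_on_spread_char_two_general
    {K L : Type*} [Field K] [Field L] [Fintype L] [Algebra K L]
    (hchar : ringChar K = 2)
    (M : GL (Fin 2) L)
    (hirr : Irreducible (Matrix.charpoly (M : Matrix (Fin 2) (Fin 2) L)))
    (hord : orderOf M = Fintype.card L ^ 2 - 1) :
    (∀ U ∈ fieldReductionSpread K L, ∀ U' ∈ fieldReductionSpread K L,
      ∃! A : GL (Fin 2) L,
        A ∈ Subgroup.zpowers (M ^ (Fintype.card L - 1)) ∧ mapGLK K A U = U')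
    ∧ ∀ U ∈ fieldReductionSpread K L,
        fieldReductionSpread K L
          = {U' | ∃ A ∈ Subgroup.zpowers (M ^ (Fintype.card L - 1)),
              U' = mapGLK K A U} := by
  have hq : Even (Fintype.card L) := Nat.even_iff.2 <|
    FiniteField.even_card_of_char_two ((Algebra.ringChar_eq K L).symm.trans hchar)
  refine ⟨fun U hU U' hU' ↦ ?_, fun U hU ↦ ?_⟩
  · obtain ⟨hinj, hsurj⟩ := bijective_mapGLK_zpowers (K := K) hq hirr hord hU
    obtain ⟨⟨A, hA⟩, hAU⟩ := hsurj ⟨U', hU'⟩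
    refine ⟨A, ⟨hA, congrArg Subtype.val hAU⟩, fun B ⟨hB, hBU⟩ ↦ ?_⟩
    have hBA : (⟨B, hB⟩ : Subgroup.zpowers _) = ⟨A, hA⟩ :=
      hinj (Subtype.ext (hBU.trans (congrArg Subtype.val hAU).symm))
    exact congrArg Subtype.val hBA
  · have hsurj := (bijective_mapGLK_zpowers (K := K) hq hirr hord hU).2
    ext U'
    constructor
    · intro hU'
      obtain ⟨⟨A, hA⟩, hAU⟩ := hsurj ⟨U', hU'⟩
      exact ⟨A, hA, (congrArg Subtype.val hAU).symm⟩
    · rintro ⟨A, -, rfl⟩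
      exact mapGLK_mem_fieldReductionSpread A hU

/-- Let `K` be a finite field of characteristic `2`, `L/K` an extension of
degree `k ≥ 1`, `S` the planar spread of the `K`-space `L²` by field reduction,
`M ∈ GL(2, L)` a Singer cycle and `H̄ = ⟨M^{|L|−1}⟩`. Then `H̄` acts regularly on `S`:
for any `U, U′ ∈ S` there is exactly one `A ∈ H̄` with `U·A = U′`; in particular `S` is the
`H̄`-orbit of any of its elements. -/
theorem singer_subgroup_regular_on_spread_char_two
    {K L : Type*} [Field K] [Fintype K] [Field L] [Fintype L] [Algebra K L]
    (hchar : ringChar K = 2)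
    (k : ℕ) (hk : 1 ≤ k) (hdeg : finrank K L = k)
    (M : GL (Fin 2) L)
    (hirr : Irreducible (Matrix.charpoly (M : Matrix (Fin 2) (Fin 2) L)))
    (hord : orderOf M = Fintype.card L ^ 2 - 1) :
    (∀ U ∈ fieldReductionSpread K L, ∀ U' ∈ fieldReductionSpread K L,
      ∃! A : GL (Fin 2) L,
        A ∈ Subgroup.zpowers (M ^ (Fintype.card L - 1)) ∧ mapGLK K A U = U')
    ∧ ∀ U ∈ fieldReductionSpread K L,
        fieldReductionSpread K L
          = {U' | ∃ A ∈ Subgroup.zpowers (M ^ (Fintype.card L - 1)),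
              U' = mapGLK K A U} :=
  singer_subgroup_regular_on_spread_char_two_general hchar M hirr hord
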